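/- arXiv:1911.05867 — 3 statements merged into one kernel-verified Lean document; each statement's English description precedes it below -/
import Mathlib

section
/- Let d ≥ 2 be an integer and let 0 < a < r be real numbers. Then ∫₀^π (sin φ)^{d−2} (a² − 2ar cos φ + r²)^{−d/2} dφ = B((d−1)/2, 1/2) · r^{2−d} / (r² − a²), where B(x,y) = Γ(x)Γ(y)/Γ(x+y) is the Beta function. -/
open MeasureTheory Metric Set Real Filter

/-!
Put `s(t) = √(a² - 2ar cos t + r²)` and let `ψ(t)`, `χ(t)` be the angles of the triangle with
sides `a`, `r` enclosing the angle `t`, at the far ends of the sides `a` and `r` respectively. The law of sines gives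
`sin ψ = r sin t / s` and `sin χ = a sin t / s`, and differentiating the law of cosines gives
`ψ' = -r (r - a cos t) / s²`, `χ' = -a (a - r cos t) / s²`. With `G u = ∫₀ᵘ sinⁿ`, the function
`(a⁻ⁿ G ∘ χ - r⁻ⁿ G ∘ ψ) / (r² - a²)` is therefore an antiderivative of `sinⁿ t / sⁿ⁺²`. As `t` runs
from `0` to `π`, `χ` starts and ends at `0` while `ψ` runs from `π` to `0` (because `a < r`), so the
integral equals `r⁻ⁿ ∫₀^π sinⁿ / (r² - a²)`, and the Wallis recursion evaluates `∫₀^π sinⁿ` as a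
Beta value.
-/

theorem integral_sin_pow_eq_beta (n : ℕ) :
    ∫ x in (0 : ℝ)..π, sin x ^ n
      = Gamma ((n + 1) / 2) * Gamma (1 / 2) / Gamma ((n + 1) / 2 + 1 / 2) := by
  induction n using Nat.twoStepInduction with
  | zero =>
    norm_num [Gamma_one_half_eq, mul_self_sqrt pi_pos.le]
  | one =>
    rw [show ((1 : ℕ) + 1 : ℝ) / 2 + 1 / 2 = 1 / 2 + 1 by norm_num, Gamma_add_one (by norm_num)]
    have := (sqrt_pos.mpr pi_pos).ne'
    norm_num [Gamma_one_half_eq]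
    field_simp
  | more n ih _ =>
    have hA : Gamma ((n + 1) / 2) ≠ 0 := (Gamma_pos_of_pos (by positivity)).ne'
    have hB : Gamma ((n + 1) / 2 + 1 / 2) ≠ 0 := (Gamma_pos_of_pos (by positivity)).ne'
    rw [integral_sin_pow, ih]
    simp only [sin_zero, sin_pi, zero_pow n.succ_ne_zero, zero_mul, sub_self, zero_div, zero_add]
    push_cast
    rw [show ((n : ℝ) + 2 + 1) / 2 = (n + 1) / 2 + 1 by ring,
      show ((n : ℝ) + 1) / 2 + 1 + 1 / 2 = (n + 1) / 2 + 1 / 2 + 1 by ring,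
      Gamma_add_one (by positivity), Gamma_add_one (by positivity)]
    field_simp
    ring

theorem sq_sub_two_mul_mul_cos_add_sq_pos {p q : ℝ} (hpq₀ : 0 ≤ p * q) (hpq : p ≠ q) (t : ℝ) :
    0 < p ^ 2 - 2 * p * q * cos t + q ^ 2 := by
  have := sub_ne_zero.mpr hpq
  have : 0 < (p - q) ^ 2 := by positivity
  nlinarith [cos_le_one t]

/-- The angle at the vertex `(p, 0)` of the triangle with vertices `0`, `(p, 0)` and
`q (cos t, sin t)`. -/
noncomputable def triangleAngle (p q t : ℝ) : ℝ :=
  arccos ((p - q * cos t) / √(p ^ 2 - 2 * p * q * cos t + q ^ 2))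

section triangleAngle

variable {p q t : ℝ}

theorem one_sub_sq_cos_triangleAngle (hQ : 0 < p ^ 2 - 2 * p * q * cos t + q ^ 2) :
    1 - ((p - q * cos t) / √(p ^ 2 - 2 * p * q * cos t + q ^ 2)) ^ 2
      = (q * sin t / √(p ^ 2 - 2 * p * q * cos t + q ^ 2)) ^ 2 := by
  rw [div_pow, div_pow, sq_sqrt hQ.le, eq_div_iff hQ.ne', sub_mul, div_mul_cancel₀ _ hQ.ne']
  linear_combination (-q ^ 2) * sin_sq_add_cos_sq t

theorem sin_triangleAngle (hq : 0 ≤ q) (ht : 0 ≤ sin t)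
    (hQ : 0 < p ^ 2 - 2 * p * q * cos t + q ^ 2) :
    sin (triangleAngle p q t) = q * sin t / √(p ^ 2 - 2 * p * q * cos t + q ^ 2) := by
  rw [triangleAngle, sin_arccos, one_sub_sq_cos_triangleAngle hQ,
    sqrt_sq (div_nonneg (mul_nonneg hq ht) (sqrt_nonneg _))]

theorem hasDerivAt_triangleAngle (hp : 0 ≤ p) (hq : 0 < q) (hpq : p ≠ q) (ht : t ∈ Ioo 0 π) :
    HasDerivAt (triangleAngle p q)
      (-(q * (q - p * cos t)) / (p ^ 2 - 2 * p * q * cos t + q ^ 2)) t := by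
  have hQ := sq_sub_two_mul_mul_cos_add_sq_pos (mul_nonneg hp hq.le) hpq t
  have hs : 0 < √(p ^ 2 - 2 * p * q * cos t + q ^ 2) := sqrt_pos.2 hQ
  have hsin : 0 < sin t := sin_pos_of_pos_of_lt_pi ht.1 ht.2
  have hsinθ := sin_triangleAngle hq.le hsin.le hQ
  rw [triangleAngle, sin_arccos] at hsinθ
  have hcos : HasDerivAt (fun t ↦ (p - q * cos t) / √(p ^ 2 - 2 * p * q * cos t + q ^ 2)) _ t :=
    ((hasDerivAt_cos t).const_mul q).const_sub p |>.div
    (((((hasDerivAt_cos t).const_mul (2 * p * q)).const_sub (p ^ 2)).add_const (q ^ 2)).sqrt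
      hQ.ne') hs.ne'
  have hsq_lt : ((p - q * cos t) / √(p ^ 2 - 2 * p * q * cos t + q ^ 2)) ^ 2 < 1 := by
    nlinarith [one_sub_sq_cos_triangleAngle hQ, pow_pos (div_pos (mul_pos hq hsin) hs) 2]
  have harccos := (hasDerivAt_arccos (by nlinarith) (by nlinarith)).comp t hcos
  refine harccos.congr_deriv ?_
  have hs2 := sq_sqrt hQ.le
  rw [hsinθ]
  generalize √(p ^ 2 - 2 * p * q * cos t + q ^ 2) = s at hs hs2 ⊢
  rw [← hs2]
  field_simp
  linear_combination -hs2

theorem continuous_triangleAngle (hpq₀ : 0 ≤ p * q) (hpq : p ≠ q) :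
    Continuous (triangleAngle p q) :=
  continuous_arccos.comp <| Continuous.div (by fun_prop) (by fun_prop)
    fun t ↦ (sqrt_pos.2 (sq_sub_two_mul_mul_cos_add_sq_pos hpq₀ hpq t)).ne'

theorem triangleAngle_zero_of_lt (h : q < p) : triangleAngle p q 0 = 0 := by
  rw [triangleAngle, cos_zero, show p ^ 2 - 2 * p * q * 1 + q ^ 2 = (p - q) ^ 2 by ring,
    sqrt_sq (sub_nonneg.2 h.le), mul_one, div_self (sub_ne_zero.2 h.ne'), arccos_one]

theorem triangleAngle_zero_of_gt (h : p < q) : triangleAngle p q 0 = π := by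
  rw [triangleAngle, cos_zero, show p ^ 2 - 2 * p * q * 1 + q ^ 2 = (q - p) ^ 2 by ring,
    sqrt_sq (sub_nonneg.2 h.le), mul_one, ← neg_sub, neg_div, div_self (sub_ne_zero.2 h.ne'),
    arccos_neg_one]

theorem triangleAngle_pi (h : 0 < p + q) : triangleAngle p q π = 0 := by
  rw [triangleAngle, cos_pi, show p ^ 2 - 2 * p * q * -1 + q ^ 2 = (p + q) ^ 2 by ring,
    sqrt_sq h.le, mul_neg_one, sub_neg_eq_add, div_self h.ne', arccos_one]

end triangleAngle

noncomputable def sinPowPrimitive (n : ℕ) (u : ℝ) : ℝ :=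
  ∫ x in (0 : ℝ)..u, sin x ^ n

theorem hasDerivAt_sinPowPrimitive (n : ℕ) (u : ℝ) :
    HasDerivAt (sinPowPrimitive n) (sin u ^ n) u :=
  ((continuous_sin.pow n).integral_hasStrictDerivAt 0 u).hasDerivAt

theorem continuous_sinPowPrimitive (n : ℕ) : Continuous (sinPowPrimitive n) :=
  continuous_iff_continuousAt.2 fun u ↦ (hasDerivAt_sinPowPrimitive n u).continuousAt

theorem hasDerivAt_sinPowPrimitive_triangleAngle (n : ℕ) {a r t : ℝ} (ha : 0 < a) (hr : 0 < r)
    (har : a ≠ r) (ht : t ∈ Ioo 0 π) :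
    HasDerivAt (fun t ↦ ((a ^ n)⁻¹ * sinPowPrimitive n (triangleAngle r a t)
        - (r ^ n)⁻¹ * sinPowPrimitive n (triangleAngle a r t)) / (r ^ 2 - a ^ 2))
      (sin t ^ n * (√(a ^ 2 - 2 * a * r * cos t + r ^ 2) ^ (n + 2))⁻¹) t := by
  have hsymm : r ^ 2 - 2 * r * a * cos t + a ^ 2 = a ^ 2 - 2 * a * r * cos t + r ^ 2 := by ring
  have hQ := sq_sub_two_mul_mul_cos_add_sq_pos (mul_pos ha hr).le har t
  have hsin := (sin_pos_of_pos_of_lt_pi ht.1 ht.2).le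
  have hra : r ^ 2 - a ^ 2 ≠ 0 :=
    sub_ne_zero.2 fun h ↦ har ((pow_left_inj₀ ha.le hr.le two_ne_zero).1 h.symm)
  have hψ := (hasDerivAt_sinPowPrimitive n _).comp t (hasDerivAt_triangleAngle ha.le hr har ht)
  have hχ := (hasDerivAt_sinPowPrimitive n _).comp t
    (hasDerivAt_triangleAngle hr.le ha har.symm ht)
  refine (((hχ.const_mul _).sub (hψ.const_mul _)).div_const _).congr_deriv ?_
  rw [sin_triangleAngle hr.le hsin hQ, sin_triangleAngle ha.le hsin (hsymm ▸ hQ), hsymm]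
  have hs := sqrt_pos.2 hQ
  have hs2 := sq_sqrt hQ.le
  generalize √(a ^ 2 - 2 * a * r * cos t + r ^ 2) = s at hs hs2 ⊢
  rw [← hs2, div_pow, div_pow]
  field_simp
  ring

theorem integral_sin_pow_mul_inv_sqrt_pow (n : ℕ) {a r : ℝ} (ha : 0 < a) (har : a < r) :
    ∫ t in (0 : ℝ)..π, sin t ^ n * (√(a ^ 2 - 2 * a * r * cos t + r ^ 2) ^ (n + 2))⁻¹
      = (r ^ n)⁻¹ * (∫ x in (0 : ℝ)..π, sin x ^ n) / (r ^ 2 - a ^ 2) := by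
  have hr := ha.trans har
  have hQ := sq_sub_two_mul_mul_cos_add_sq_pos (mul_pos ha hr).le har.ne
  have hψ := continuous_triangleAngle (mul_pos ha hr).le har.ne
  have hχ := continuous_triangleAngle (mul_pos hr ha).le har.ne'
  rw [intervalIntegral.integral_eq_sub_of_hasDerivAt_of_le pi_pos.le ?_
    (fun t ht ↦ hasDerivAt_sinPowPrimitive_triangleAngle n ha hr har.ne ht) ?_]
  · simp only [triangleAngle_pi (add_pos ha hr), triangleAngle_pi (add_pos hr ha),
      triangleAngle_zero_of_lt har, triangleAngle_zero_of_gt har, sinPowPrimitive,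
      intervalIntegral.integral_same]
    ring
  · exact Continuous.continuousOn <| Continuous.div_const (Continuous.sub
      (continuous_const.mul ((continuous_sinPowPrimitive n).comp hχ))
      (continuous_const.mul ((continuous_sinPowPrimitive n).comp hψ))) _
  · refine Continuous.intervalIntegrable (Continuous.mul (by fun_prop) ?_) _ _
    exact Continuous.inv₀ (by fun_prop) fun t ↦ (pow_pos (sqrt_pos.2 (hQ t)) _).ne'

/-- `∫₀^π (sin φ)^{d−2} (a² − 2ar cos φ + r²)^{−d/2} dφ
      = B((d−1)/2, 1/2) · r^{2−d} / (r² − a²)` for `0 < a < r`. -/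
theorem stmt3 (d : ℕ) (hd : 2 ≤ d) (a r : ℝ) (ha : 0 < a) (har : a < r) :
    ∫ φ in (0 : ℝ)..π, (Real.sin φ) ^ (d - 2) *
        (a ^ 2 - 2 * a * r * Real.cos φ + r ^ 2) ^ (-(d : ℝ) / 2)
      = (Real.Gamma (((d : ℝ) - 1) / 2) * Real.Gamma (1 / 2) /
          Real.Gamma (((d : ℝ) - 1) / 2 + 1 / 2)) * r ^ ((2 : ℝ) - d) / (r ^ 2 - a ^ 2) := by
  obtain ⟨n, rfl⟩ : ∃ n, d = n + 2 := ⟨d - 2, by omega⟩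
  have hQ := sq_sub_two_mul_mul_cos_add_sq_pos (mul_pos ha (ha.trans har)).le har.ne
  have hpow (t : ℝ) : (a ^ 2 - 2 * a * r * cos t + r ^ 2) ^ (-((n + 2 : ℕ) : ℝ) / 2)
      = (√(a ^ 2 - 2 * a * r * cos t + r ^ 2) ^ (n + 2))⁻¹ := by
    rw [rpow_div_two_eq_sqrt _ (hQ t).le, rpow_neg (sqrt_nonneg _), rpow_natCast]
  simp_rw [Nat.add_sub_cancel, hpow, integral_sin_pow_mul_inv_sqrt_pow n ha har,
    integral_sin_pow_eq_beta]
  rw [show ((n + 2 : ℕ) : ℝ) - 1 = n + 1 by push_cast; ring,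
    show (2 : ℝ) - (n + 2 : ℕ) = -n by push_cast; ring, rpow_neg (ha.trans har).le, rpow_natCast]
  ring
end

section
/- Let d ≥ 2 be an integer, let α ∈ (0,2), let R > 1, let S ⊆ S^{d-1} be a closed set, and let θ ∈ S^{d-1} with θ ∉ S. Then the double integral ∫_{{y ∈ ℝ^d : 1 < |y| < R}} ∫_{S} (|y|² − 1)^{α} |θ − y|^{−d} |φ − y|^{−d} σ₁(dφ) dy is finite. -/
open MeasureTheory Metric Set Real Filter
open scoped ENNReal

/-! Since `S` is closed, `e := dist(θ, S) / 2 > 0`, so for `φ ∈ S` and every `y` one of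
`|θ - y|`, `|φ - y|` is at least `e`. Bounding that factor by `e^{-d}`, and `|y|² - 1` by
`(R + 1) |c - y|` for the other point `c` (as `|y| - 1 ≤ |c - y|`), the integrand is at most
`(R + 1)^α e^{-d} (|θ - y|^{α-d} + |φ - y|^{α-d})`. Since `α - d > -d` both terms are locally
integrable, uniformly in the centre on the unit sphere, so after Tonelli the inner integral over
the annulus is bounded uniformly in `φ ∈ S`, and `σ₁` is finite. -/

/-- The uniform probability measure on the unit sphere in `ℝ^d`, viewed as a measure on `ℝ^d`. -/
noncomputable def unifSphere (d : ℕ) : Measure (EuclideanSpace ℝ (Fin d)) :=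
  let ν : Measure (EuclideanSpace ℝ (Fin d)) :=
    ((volume : Measure (EuclideanSpace ℝ (Fin d))).toSphere).map Subtype.val
  (ν Set.univ)⁻¹ • ν

instance isFiniteMeasure_unifSphere (d : ℕ) : IsFiniteMeasure (unifSphere d) :=
  ⟨(ENNReal.inv_mul_le_one _).trans_lt ENNReal.one_lt_top⟩

theorem rpow_mul_rpow_neg_mul_rpow_neg_le {t a b e K α s : ℝ} (hα : 0 ≤ α) (hs : 0 ≤ s)
    (he : 0 < e) (ha : 0 < a) (hb : 0 < b) (hab : 2 * e ≤ a + b) (ht : 0 ≤ t)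
    (hta : t ≤ K * a) (htb : t ≤ K * b) :
    t ^ α * a ^ (-s) * b ^ (-s) ≤ K ^ α * e ^ (-s) * (a ^ (α - s) + b ^ (α - s)) := by
  wlog heb : e ≤ b generalizing a b
  · have := this hb ha (by linarith) htb hta (by linarith)
    linarith [mul_right_comm (t ^ α) (a ^ (-s)) (b ^ (-s)), add_comm (a ^ (α - s)) (b ^ (α - s))]
  have hK : 0 ≤ K := nonneg_of_mul_nonneg_left (ht.trans hta) ha
  have htα : t ^ α ≤ K ^ α * a ^ α := by
    rw [← mul_rpow hK ha.le]
    exact rpow_le_rpow ht hta hα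
  have hbs : b ^ (-s) ≤ e ^ (-s) := rpow_le_rpow_of_nonpos he heb (neg_nonpos.2 hs)
  calc t ^ α * a ^ (-s) * b ^ (-s) ≤ K ^ α * a ^ α * a ^ (-s) * e ^ (-s) := by gcongr
    _ = K ^ α * e ^ (-s) * a ^ (α - s) := by rw [sub_eq_add_neg, rpow_add ha]; ring
    _ ≤ K ^ α * e ^ (-s) * (a ^ (α - s) + b ^ (α - s)) := by
        gcongr
        exact le_add_of_nonneg_right (by positivity)

theorem sq_norm_sub_one_le_mul_norm_sub {E : Type*} [SeminormedAddCommGroup E] {c y : E}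
    (hc : ‖c‖ ≤ 1) (hy : 1 ≤ ‖y‖) : ‖y‖ ^ 2 - 1 ≤ (‖y‖ + 1) * ‖c - y‖ := by
  have : ‖y‖ - 1 ≤ ‖c - y‖ := by
    have := norm_sub_norm_le y c
    rw [norm_sub_rev] at this
    linarith
  nlinarith

section HaarMeasure

variable {E : Type*} [NormedAddCommGroup E] [NormedSpace ℝ E] [FiniteDimensional ℝ E]
  [MeasurableSpace E] [BorelSpace E] (μ : Measure E) [μ.IsAddHaarMeasure]

theorem lintegral_closedBall_norm_rpow_lt_top (hdim : 1 ≤ Module.finrank ℝ E) {s : ℝ}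
    (hs : -(Module.finrank ℝ E : ℝ) < s) (r : ℝ) :
    ∫⁻ z in closedBall (0 : E) r, ENNReal.ofReal (‖z‖ ^ s) ∂μ < ⊤ := by
  have hloc : LocallyIntegrable (fun z : E => ‖z‖ ^ s) μ :=
    locallyIntegrable_of_norm_le_rpow (C := 1) (α := -s) hdim (by linarith)
      (Eventually.of_forall fun z => by
        rw [neg_neg, one_mul, Real.norm_of_nonneg (by positivity)])
      (measurable_norm.pow_const s).aestronglyMeasurable
  exact (hloc.integrableOn_isCompact (isCompact_closedBall 0 r)).setLIntegral_lt_top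

theorem setLIntegral_norm_sub_rpow_le {A : Set E} {c : E} {r : ℝ} (hA : ∀ y ∈ A, ‖c - y‖ ≤ r)
    (s : ℝ) :
    ∫⁻ y in A, ENNReal.ofReal (‖c - y‖ ^ s) ∂μ
      ≤ ∫⁻ z in closedBall (0 : E) r, ENNReal.ofReal (‖z‖ ^ s) ∂μ := by
  set g : E → ℝ≥0∞ := (closedBall (0 : E) r).indicator fun z => ENNReal.ofReal (‖z‖ ^ s)
    with hg_def
  have hg : Measurable g :=
    (measurable_norm.pow_const s).ennreal_ofReal.indicator measurableSet_closedBall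
  calc ∫⁻ y in A, ENNReal.ofReal (‖c - y‖ ^ s) ∂μ ≤ ∫⁻ y in A, g (c - y) ∂μ :=
        setLIntegral_mono (hg.comp (measurable_const.sub measurable_id)) fun y hy => by
          rw [hg_def, indicator_of_mem (mem_closedBall_zero_iff.2 (hA y hy))]
    _ ≤ ∫⁻ y, g (c - y) ∂μ := setLIntegral_le_lintegral _ _
    _ = ∫⁻ z, g z ∂μ := lintegral_sub_left_eq_self g c
    _ = _ := lintegral_indicator measurableSet_closedBall _

theorem setLIntegral_annulus_kernel_le {α s R e : ℝ} (hα : 0 ≤ α) (hs : 0 ≤ s) (he : 0 < e)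
    {θ φ : E} (hθ : ‖θ‖ ≤ 1) (hφ : ‖φ‖ ≤ 1) (hθφ : 2 * e ≤ ‖θ - φ‖) :
    ∫⁻ y in {y : E | 1 < ‖y‖ ∧ ‖y‖ < R},
        ENNReal.ofReal ((‖y‖ ^ 2 - 1) ^ α * ‖θ - y‖ ^ (-s) * ‖φ - y‖ ^ (-s)) ∂μ
      ≤ ENNReal.ofReal ((R + 1) ^ α * e ^ (-s))
          * (2 * ∫⁻ z in closedBall (0 : E) (R + 1), ENNReal.ofReal (‖z‖ ^ (α - s)) ∂μ) := by
  set A := {y : E | 1 < ‖y‖ ∧ ‖y‖ < R}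
  set C := (R + 1) ^ α * e ^ (-s)
  have hA : MeasurableSet A :=
    (measurableSet_lt measurable_const measurable_norm).inter
      (measurableSet_lt measurable_norm measurable_const)
  have hnear {c : E} (hc : ‖c‖ ≤ 1) (y : E) (hy : y ∈ A) : ‖c - y‖ ≤ R + 1 := by
    linarith [norm_sub_le c y, hy.2]
  have hpointwise (y : E) (hy : y ∈ A) :
      ENNReal.ofReal ((‖y‖ ^ 2 - 1) ^ α * ‖θ - y‖ ^ (-s) * ‖φ - y‖ ^ (-s))
        ≤ ENNReal.ofReal C
            * (ENNReal.ofReal (‖θ - y‖ ^ (α - s)) + ENNReal.ofReal (‖φ - y‖ ^ (α - s))) := by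
    obtain ⟨hy1, hyR⟩ := hy
    have hsq {c : E} (hc : ‖c‖ ≤ 1) : ‖y‖ ^ 2 - 1 ≤ (R + 1) * ‖c - y‖ :=
      (sq_norm_sub_one_le_mul_norm_sub hc hy1.le).trans (by gcongr)
    have hpos {c : E} (hc : ‖c‖ ≤ 1) : 0 < ‖c - y‖ := by
      linarith [norm_sub_norm_le y c, norm_sub_rev y c]
    have hsum : 2 * e ≤ ‖θ - y‖ + ‖φ - y‖ := by
      linarith [norm_sub_le_norm_sub_add_norm_sub θ y φ, norm_sub_rev y φ]
    rw [← ENNReal.ofReal_add (by positivity) (by positivity), ← ENNReal.ofReal_mul' (by positivity)]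
    exact ENNReal.ofReal_le_ofReal <| rpow_mul_rpow_neg_mul_rpow_neg_le hα hs he
      (hpos hθ) (hpos hφ) hsum (by nlinarith) (hsq hθ) (hsq hφ)
  calc _ ≤ ∫⁻ y in A, ENNReal.ofReal C
            * (ENNReal.ofReal (‖θ - y‖ ^ (α - s)) + ENNReal.ofReal (‖φ - y‖ ^ (α - s))) ∂μ :=
        setLIntegral_mono' hA hpointwise
    _ = ENNReal.ofReal C * ((∫⁻ y in A, ENNReal.ofReal (‖θ - y‖ ^ (α - s)) ∂μ)
          + ∫⁻ y in A, ENNReal.ofReal (‖φ - y‖ ^ (α - s)) ∂μ) := by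
        rw [lintegral_const_mul _ (by fun_prop), lintegral_add_left (by fun_prop)]
    _ ≤ _ := by
        rw [two_mul]
        gcongr _ * (?_ + ?_)
        · exact setLIntegral_norm_sub_rpow_le μ (hnear hθ) _
        · exact setLIntegral_norm_sub_rpow_le μ (hnear hφ) _

end HaarMeasure

theorem stmt8_general (d : ℕ) (hd : 2 ≤ d) (α : ℝ) (hα : α ∈ Set.Ioo (0 : ℝ) 2) (R : ℝ)
    (S : Set (EuclideanSpace ℝ (Fin d))) (hS : IsClosed S)
    (hSsub : S ⊆ sphere (0 : EuclideanSpace ℝ (Fin d)) 1)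
    (θ : EuclideanSpace ℝ (Fin d)) (hθ : ‖θ‖ = 1) (hθS : θ ∉ S) :
    ∫⁻ y in {y : EuclideanSpace ℝ (Fin d) | 1 < ‖y‖ ∧ ‖y‖ < R},
        ∫⁻ φ in S,
          ENNReal.ofReal ((‖y‖ ^ 2 - 1) ^ α * ‖θ - y‖ ^ (-(d : ℝ)) * ‖φ - y‖ ^ (-(d : ℝ)))
          ∂(unifSphere d) < ⊤ := by
  rcases S.eq_empty_or_nonempty with rfl | hSne
  · simp
  have he : 0 < infDist θ S / 2 := half_pos ((hS.notMem_iff_infDist_pos hSne).1 hθS)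
  set B := ∫⁻ z in closedBall (0 : EuclideanSpace ℝ (Fin d)) (R + 1),
    ENNReal.ofReal (‖z‖ ^ (α - d))
  have hB : B < ⊤ := lintegral_closedBall_norm_rpow_lt_top _ (by simp; omega)
    (by simp; linarith [hα.1]) (R + 1)
  set M := ENNReal.ofReal ((R + 1) ^ α * (infDist θ S / 2) ^ (-(d : ℝ))) * (2 * B)
  have hM : M ≠ ⊤ := ENNReal.mul_ne_top ENNReal.ofReal_ne_top (ENNReal.mul_ne_top (by simp) hB.ne)
  rw [lintegral_lintegral_swap (by fun_prop)]
  refine setLIntegral_lt_top_of_le_nnreal (measure_ne_top _ _) ⟨M.toNNReal, fun φ hφ => ?_⟩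
  rw [ENNReal.coe_toNNReal hM]
  refine setLIntegral_annulus_kernel_le _ hα.1.le (Nat.cast_nonneg d) he hθ.le
    (mem_sphere_zero_iff_norm.1 (hSsub hφ)).le ?_
  linarith [infDist_le_dist_of_mem (x := θ) hφ, dist_eq_norm θ φ]

/-- For `θ ∈ S^{d-1} \ S`, the double integral
`∫_{1<|y|<R} ∫_S (|y|²−1)^α |θ−y|^{−d} |φ−y|^{−d} σ₁(dφ) dy` is finite. -/
theorem stmt8 (d : ℕ) (hd : 2 ≤ d) (α : ℝ) (hα : α ∈ Set.Ioo (0 : ℝ) 2) (R : ℝ) (hR : 1 < R)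
    (S : Set (EuclideanSpace ℝ (Fin d))) (hS : IsClosed S)
    (hSsub : S ⊆ sphere (0 : EuclideanSpace ℝ (Fin d)) 1)
    (θ : EuclideanSpace ℝ (Fin d)) (hθ : ‖θ‖ = 1) (hθS : θ ∉ S) :
    ∫⁻ y in {y : EuclideanSpace ℝ (Fin d) | 1 < ‖y‖ ∧ ‖y‖ < R},
        ∫⁻ φ in S,
          ENNReal.ofReal ((‖y‖ ^ 2 - 1) ^ α * ‖θ - y‖ ^ (-(d : ℝ)) * ‖φ - y‖ ^ (-(d : ℝ)))
          ∂(unifSphere d) < ⊤ :=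
  stmt8_general d hd α hα R S hS hSsub θ hθ hθS
end

section
/- Let d ≥ 2 be an integer, let α be a real number, let θ ∈ ℝ^d with |θ| = 1, and let g : ℝ^d → [0,∞] be a Borel measurable function. Then ∫_{{z ∈ ℝ^d : |z| > 1}} g(z/|z|²) |z|^{−2α} (|z|² − 1)^{α/2} |θ − z|^{−d} dz = ∫_{{y ∈ ℝ^d : 0 < |y| < 1}} g(y) |y|^{α−d} (1 − |y|²)^{α/2} |θ − y|^{−d} dy, where both integrals are with respect to Lebesgue measure on ℝ^d. -/
/-!
The inversion `K = inversion 0 1` is an involution mapping `{1 < ‖z‖}` onto the punctured unit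
ball, with `|det DK(z)| = ‖z‖^(-2d)`, `‖Kz‖ = ‖z‖⁻¹`, and `‖θ - Kz‖ = ‖θ - z‖ / ‖z‖` for `θ` on the
unit sphere. Substituting `y = Kz` in the right-hand integral, the identity reduces to an
equality of real weights in `r = ‖z‖` and `m = ‖θ - z‖`.
-/

open MeasureTheory Metric Set Real Filter

theorem inv_pow_mul_weight_inv (d : ℕ) (α : ℝ) {r m : ℝ} (hr : 1 < r) (hm : 0 ≤ m) :
    r⁻¹ ^ (2 * d) * (r⁻¹ ^ (α - d) * (1 - r⁻¹ ^ 2) ^ (α / 2) * (r⁻¹ * m) ^ (-(d : ℝ))) =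
      r ^ (-2 * α) * (r ^ 2 - 1) ^ (α / 2) * m ^ (-(d : ℝ)) := by
  have hr0 : 0 < r := one_pos.trans hr
  have hinv : ∀ x : ℝ, r⁻¹ ^ x = r ^ (-x) := fun x => by rw [inv_rpow hr0.le, rpow_neg hr0.le]
  have hsq : 1 - r⁻¹ ^ 2 = (r ^ 2 - 1) * r⁻¹ ^ 2 := by field_simp
  rw [hsq, mul_rpow (by nlinarith) (by positivity), mul_rpow (by positivity) hm,
    ← rpow_natCast r⁻¹ (2 * d), ← rpow_natCast r⁻¹ 2, ← rpow_mul (by positivity), hinv, hinv, hinv,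
    hinv, show -2 * α = -((2 * d : ℕ) : ℝ) + -(α - d) + -((2 : ℕ) * (α / 2)) + -(-(d : ℝ)) by
      push_cast; ring, rpow_add hr0, rpow_add hr0, rpow_add hr0]
  ring

namespace EuclideanGeometry

variable {E : Type*} [NormedAddCommGroup E] [InnerProductSpace ℝ E]

theorem image_inversion_compl_closedBall {c : E} {R : ℝ} (hR : 0 < R) :
    inversion c R '' (closedBall c R)ᶜ = ball c R \ {c} := by
  ext y
  simp only [mem_image, mem_compl_iff, mem_closedBall, not_le, Set.mem_sdiff, Metric.mem_ball,
    Set.mem_singleton_iff]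
  constructor
  · rintro ⟨z, hz, rfl⟩
    have hz0 : 0 < dist z c := hR.trans hz
    refine ⟨?_, fun h => ?_⟩
    · rw [dist_inversion_center, div_lt_iff₀ hz0]
      nlinarith
    · rw [inversion_eq_center hR.ne'] at h
      simp [h] at hz0
  · rintro ⟨hy, hyc⟩
    have hy0 : 0 < dist y c := dist_pos.2 hyc
    refine ⟨inversion c R y, ?_, inversion_inversion c hR.ne' y⟩
    rw [dist_inversion_center, lt_div_iff₀ hy0]
    nlinarith [mul_lt_mul_of_pos_left hy hR]

theorem dist_inversion_of_mem_sphere {c x θ : E} {R : ℝ} (hR : R ≠ 0) (hθ : θ ∈ sphere c R)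
    (hx : x ≠ c) : dist θ (inversion c R x) = R / dist x c * dist θ x := by
  have hθc : θ ≠ c := ne_of_mem_sphere hθ hR
  nth_rw 1 [← inversion_of_mem_sphere hθ]
  rw [dist_inversion_inversion hθc hx, Metric.mem_sphere.1 hθ]
  congr 1
  field_simp

theorem inversion_zero_one_apply (z : E) : inversion (0 : E) 1 z = (‖z‖ ^ 2)⁻¹ • z := by
  simp [inversion]

variable [FiniteDimensional ℝ E]

theorem _root_.Submodule.abs_det_reflection (K : Submodule ℝ E) [K.HasOrthogonalProjection] :
    |LinearMap.det ((K.reflection : E →L[ℝ] E) : E →ₗ[ℝ] E)| = 1 := by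
  change |LinearMap.det K.reflection.toLinearMap| = 1
  rw [K.det_reflection, abs_pow, abs_neg, abs_one, one_pow]

theorem abs_det_fderiv_inversion {c x : E} (R : ℝ) (hx : x ≠ c) :
    |(fderiv ℝ (inversion c R) x).det| = (R / dist x c) ^ (2 * Module.finrank ℝ E) := by
  rw [(hasFDerivAt_inversion hx).fderiv, ContinuousLinearMap.det,
    ContinuousLinearMap.toLinearMap_smul, LinearMap.det_smul, abs_mul,
    Submodule.abs_det_reflection, mul_one, abs_of_nonneg (by positivity), ← pow_mul]

variable [MeasurableSpace E] [BorelSpace E]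

theorem lintegral_ball_diff_center_eq_lintegral_inversion (μ : Measure E) [μ.IsAddHaarMeasure]
    {c : E} {R : ℝ} (hR : 0 < R) (f : E → ENNReal) :
    ∫⁻ y in ball c R \ {c}, f y ∂μ =
      ∫⁻ z in (closedBall c R)ᶜ,
        ENNReal.ofReal ((R / dist z c) ^ (2 * Module.finrank ℝ E)) * f (inversion c R z) ∂μ := by
  have hc : ∀ z ∈ (closedBall c R)ᶜ, z ≠ c := by
    rintro z hz rfl
    exact hz (mem_closedBall_self hR.le)
  rw [← image_inversion_compl_closedBall hR,
    lintegral_image_eq_lintegral_abs_det_fderiv_mul μ measurableSet_closedBall.compl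
      (fun z hz => (hasFDerivAt_inversion (hc z hz)).differentiableAt.hasFDerivAt.hasFDerivWithinAt)
      (inversion_injective c hR.ne').injOn]
  refine setLIntegral_congr_fun measurableSet_closedBall.compl fun z hz => ?_
  rw [abs_det_fderiv_inversion R (hc z hz)]

end EuclideanGeometry

open EuclideanGeometry

theorem stmt16_general (d : ℕ) (α : ℝ)
    (θ : EuclideanSpace ℝ (Fin d)) (hθ : ‖θ‖ = 1)
    (g : EuclideanSpace ℝ (Fin d) → ENNReal) :
    ∫⁻ z in {z : EuclideanSpace ℝ (Fin d) | 1 < ‖z‖},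
        g ((‖z‖ ^ 2)⁻¹ • z) *
          ENNReal.ofReal (‖z‖ ^ (-2 * α) * (‖z‖ ^ 2 - 1) ^ (α / 2) * ‖θ - z‖ ^ (-(d : ℝ)))
      = ∫⁻ y in {y : EuclideanSpace ℝ (Fin d) | 0 < ‖y‖ ∧ ‖y‖ < 1},
          g y *
            ENNReal.ofReal (‖y‖ ^ (α - d) * (1 - ‖y‖ ^ 2) ^ (α / 2) * ‖θ - y‖ ^ (-(d : ℝ))) := by
  have hball : {y : EuclideanSpace ℝ (Fin d) | 0 < ‖y‖ ∧ ‖y‖ < 1} = ball 0 1 \ {0} := by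
    ext y; simp [and_comm]
  have hext : {z : EuclideanSpace ℝ (Fin d) | 1 < ‖z‖} = (closedBall 0 1)ᶜ := by
    ext z; simp
  rw [hball, lintegral_ball_diff_center_eq_lintegral_inversion volume one_pos, hext,
    finrank_euclideanSpace_fin]
  refine setLIntegral_congr_fun measurableSet_closedBall.compl fun z hz => ?_
  have hz1 : 1 < ‖z‖ := by simpa using hz
  have hz0 : z ≠ 0 := norm_pos_iff.1 (one_pos.trans hz1)
  have hθ' : θ ∈ sphere (0 : EuclideanSpace ℝ (Fin d)) 1 := by simpa using hθ
  have hdist := dist_inversion_of_mem_sphere one_ne_zero hθ' hz0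
  have hnorm := dist_inversion_center (0 : EuclideanSpace ℝ (Fin d)) z 1
  simp only [dist_eq_norm, sub_zero, one_pow, one_div] at hdist hnorm ⊢
  rw [hnorm, hdist, inversion_zero_one_apply, mul_left_comm,
    ← ENNReal.ofReal_mul (by positivity), inv_pow_mul_weight_inv d α hz1 (norm_nonneg _)]

/-- Change of variables under the inversion `K z = z/|z|²`:
`∫_{|z|>1} g(Kz) |z|^{−2α} (|z|²−1)^{α/2} |θ−z|^{−d} dz
   = ∫_{0<|y|<1} g(y) |y|^{α−d} (1−|y|²)^{α/2} |θ−y|^{−d} dy`. -/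
theorem stmt16 (d : ℕ) (hd : 2 ≤ d) (α : ℝ)
    (θ : EuclideanSpace ℝ (Fin d)) (hθ : ‖θ‖ = 1)
    (g : EuclideanSpace ℝ (Fin d) → ENNReal) (hg : Measurable g) :
    ∫⁻ z in {z : EuclideanSpace ℝ (Fin d) | 1 < ‖z‖},
        g ((‖z‖ ^ 2)⁻¹ • z) *
          ENNReal.ofReal (‖z‖ ^ (-2 * α) * (‖z‖ ^ 2 - 1) ^ (α / 2) * ‖θ - z‖ ^ (-(d : ℝ)))
      = ∫⁻ y in {y : EuclideanSpace ℝ (Fin d) | 0 < ‖y‖ ∧ ‖y‖ < 1},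
          g y *
            ENNReal.ofReal (‖y‖ ^ (α - d) * (1 - ‖y‖ ^ 2) ^ (α / 2) * ‖θ - y‖ ^ (-(d : ℝ))) :=
  stmt16_general d α θ hθ g
end
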